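/- arXiv:1807.10200 — 2 statements merged into one kernel-verified Lean document; each statement's English description precedes it below -/
import Mathlib

section
/- Let 𝒜 ⊆ ℕ be an OR₊ sequence. In the space 𝒮_𝒜, for every integer h ≥ 2 one has 𝔼(ρ_{ω,h}(n)) = (1/h!)·𝔼(r_{ω,h}(n)) + O(A(n)^{h−1}/n) as n → ∞. -/
open Filter Asymptotics MeasureTheory

/-- Counting function `A(x) = |𝒜 ∩ [0,x]|`. -/
noncomputable def cntA (A : Set ℕ) (x : ℝ) : ℕ :=
  {n : ℕ | n ∈ A ∧ (n : ℝ) ≤ x}.ncard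

/-- The increasing enumeration `a₀ < a₁ < ⋯` of a set `A ⊆ ℕ`. -/
noncomputable def seqA (A : Set ℕ) (n : ℕ) : ℕ := Nat.nth (· ∈ A) n

/-- `A` is an OR sequence: `A(2x) = O(A(x))`. -/
def ORseq (A : Set ℕ) : Prop :=
  (fun x : ℝ => (cntA A (2 * x) : ℝ)) =O[atTop] (fun x : ℝ => (cntA A x : ℝ))

/-- `A` is a PI sequence: `a_{2n} = O(a_n)`. -/
def PIseq (A : Set ℕ) : Prop :=
  (fun n : ℕ => (seqA A (2 * n) : ℝ)) =O[atTop] (fun n : ℕ => (seqA A n : ℝ))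

/-- `A` is an OR₊ sequence: an infinite subset of ℕ that is both OR and PI. -/
def ORplus (A : Set ℕ) : Prop := A.Infinite ∧ ORseq A ∧ PIseq A

/-- `μ` is the product over `n : ℕ` of Bernoulli measures with parameters `α n`. -/
def IsBernoulliProduct (μ : Measure (ℕ → Bool)) (α : ℕ → ℝ) : Prop :=
  IsProbabilityMeasure μ ∧
  ∀ s : Finset ℕ, ∀ b : ℕ → Bool,
    μ {ω | ∀ n ∈ s, ω n = b n} =
      ∏ n ∈ s, ENNReal.ofReal (if b n then α n else 1 - α n)

/-- `rA A h n` is the number of ordered `h`-tuples of elements of `A` summing to `n`. -/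
noncomputable def rA (A : Set ℕ) (h n : ℕ) : ℕ :=
  {t : Fin h → ℕ | (∀ i, t i ∈ A) ∧ ∑ i, t i = n}.ncard

/-- `rhoA B h n` is the number of exact `h`-representations of `n` in `B`, i.e. sets
`{k₁ < ⋯ < k_h} ⊆ B` with `k₁ + ⋯ + k_h = n`. -/
noncomputable def rhoA (B : Set ℕ) (h n : ℕ) : ℕ :=
  {s : Finset ℕ | (↑s : Set ℕ) ⊆ B ∧ s.card = h ∧ ∑ k ∈ s, k = n}.ncard


-- ### auxiliary development ###
open Finset

/-- nat-arg counting function -/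
noncomputable def acnt (A : Set ℕ) (n : ℕ) : ℕ := cntA A n

lemma cntA_nat (A : Set ℕ) [DecidablePred (· ∈ A)] (n : ℕ) :
    acnt A n = Nat.count (· ∈ A) (n + 1) := by
  rw [acnt, cntA, Nat.count_eq_card_filter_range, ← Set.ncard_coe_finset]
  congr 1
  ext m
  simp [Nat.lt_succ_iff, and_comm]

lemma acnt_mono (A : Set ℕ) : Monotone (acnt A) := by
  classical
  intro a b hab
  rw [cntA_nat, cntA_nat]
  exact Nat.count_monotone _ (by omega)

lemma acnt_le (A : Set ℕ) (n : ℕ) : acnt A n ≤ n + 1 := by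
  classical
  rw [cntA_nat, Nat.count_eq_card_filter_range]
  exact le_trans (card_filter_le _ _) (by simp)

lemma seqA_le_iff (A : Set ℕ) (hA : A.Infinite) (m n : ℕ) :
    seqA A m ≤ n ↔ m < acnt A n := by
  classical
  have H := Nat.lt_nth_iff_count_lt (p := (· ∈ A)) (by simpa using hA) (a := m) (b := n + 1)
  rw [cntA_nat, H, seqA]
  omega

lemma acnt_tendsto (A : Set ℕ) (hA : A.Infinite) :
    Tendsto (acnt A) atTop atTop := by
  rw [tendsto_atTop]
  intro b
  rw [eventually_atTop]
  refine ⟨seqA A b, fun n hn => ?_⟩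
  exact le_of_lt ((seqA_le_iff A hA b n).1 hn)

noncomputable def alphaA (A : Set ℕ) (n : ℕ) : ℝ := (cntA A n : ℝ) / (n + 1)

lemma alphaA_eq (A : Set ℕ) (n : ℕ) : alphaA A n = (acnt A n : ℝ) / (n + 1) := rfl

lemma alphaA_nonneg (A : Set ℕ) (n : ℕ) : 0 ≤ alphaA A n := by
  rw [alphaA_eq]; positivity

lemma alphaA_le_one (A : Set ℕ) (n : ℕ) : alphaA A n ≤ 1 := by
  rw [alphaA_eq, div_le_one (by positivity)]
  exact_mod_cast acnt_le A n

noncomputable def SA (A : Set ℕ) (n : ℕ) : ℝ := ∑ k ∈ range (n + 1), alphaA A k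

lemma SA_block (A : Set ℕ) (K : ℕ) (hK : 1 ≤ K) (n : ℕ) :
    SA A n ≤ SA A (n / K) + K * acnt A n := by
  set n' := n / K with hn'
  have hle : n' + 1 ≤ n + 1 := by
    have := Nat.div_le_self n K
    omega
  have hsplit : SA A n' + ∑ k ∈ Ico (n' + 1) (n + 1), alphaA A k = SA A n := by
    rw [SA, SA]
    exact Finset.sum_range_add_sum_Ico _ hle
  have hbound : ∑ k ∈ Ico (n' + 1) (n + 1), alphaA A k
      ≤ (n - n') • ((acnt A n : ℝ) / ((n' : ℝ) + 2)) := by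
    have hcard : (Ico (n' + 1) (n + 1)).card = n - n' := by
      rw [Nat.card_Ico]; omega
    rw [← hcard]
    apply Finset.sum_le_card_nsmul
    intro k hk
    rw [Finset.mem_Ico] at hk
    rw [alphaA_eq]
    have h1 : (acnt A k : ℝ) ≤ acnt A n := by
      exact_mod_cast acnt_mono A (by omega : k ≤ n)
    have h2 : (n' : ℝ) + 2 ≤ (k : ℝ) + 1 := by
      have h2' : ((n' + 1 : ℕ) : ℝ) ≤ (k : ℝ) := by exact_mod_cast hk.1
      push_cast at h2'
      linarith
    exact div_le_div₀ (by positivity) h1 (by positivity) h2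
  have hfin : ((n - n' : ℕ) : ℝ) * ((acnt A n : ℝ) / ((n' : ℝ) + 2)) ≤ K * acnt A n := by
    have hlt : n < (n' + 1) * K := by
      have : n / K < n' + 1 := by omega
      exact (Nat.div_lt_iff_lt_mul (by omega)).1 this
    have hc : ((n - n' : ℕ) : ℝ) ≤ (K : ℝ) * ((n' : ℝ) + 2) := by
      have h3 : (n - n' : ℕ) ≤ (n' + 2) * K := by
        have := Nat.sub_le n n'
        nlinarith [hlt]
      calc ((n - n' : ℕ) : ℝ) ≤ (((n' + 2) * K : ℕ) : ℝ) := by exact_mod_cast h3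
        _ = (K : ℝ) * ((n' : ℝ) + 2) := by push_cast; ring
    set x := (acnt A n : ℝ) with hx
    have hx0 : 0 ≤ x := by positivity
    set d := (n' : ℝ) + 2 with hd
    have hd0 : (0 : ℝ) < d := by positivity
    have h1 : d * (x / d) = x := by field_simp
    nlinarith [mul_le_mul_of_nonneg_right hc (show (0:ℝ) ≤ x / d by positivity)]
  calc SA A n = SA A n' + ∑ k ∈ Ico (n' + 1) (n + 1), alphaA A k := hsplit.symm
    _ ≤ SA A n' + (n - n') • ((acnt A n : ℝ) / ((n' : ℝ) + 2)) := by linarith [hbound]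
    _ ≤ SA A n' + K * acnt A n := by
        rw [nsmul_eq_mul]
        linarith [hfin]

lemma lemB (A : Set ℕ) (hA : A.Infinite) (hPI : PIseq A) :
    ∃ D : ℝ, 0 < D ∧ ∀ᶠ n : ℕ in atTop, 1 + SA A n ≤ D * acnt A n := by
  obtain ⟨c, hc0, hc⟩ := hPI.exists_pos
  rw [IsBigOWith, eventually_atTop] at hc
  obtain ⟨N₀, hN₀⟩ := hc
  set K := max 2 (Nat.ceil c) with hKdef
  have hK2 : 2 ≤ K := le_max_left _ _
  have hcK : c ≤ (K : ℝ) := by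
    calc c ≤ (Nat.ceil c : ℝ) := Nat.le_ceil c
      _ ≤ (K : ℝ) := by exact_mod_cast le_max_right _ _
  have hKn : ∀ m, N₀ ≤ m → seqA A (2 * m) ≤ K * seqA A m := by
    intro m hm
    have h1 := hN₀ m hm
    rw [Real.norm_natCast, Real.norm_natCast] at h1
    have h2 : (seqA A (2 * m) : ℝ) ≤ (K : ℝ) * (seqA A m : ℝ) := by
      calc (seqA A (2 * m) : ℝ) ≤ c * seqA A m := h1
        _ ≤ (K : ℝ) * seqA A m := by
            apply mul_le_mul_of_nonneg_right hcK (by positivity)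
    exact_mod_cast h2
  have claim2 : ∀ n, N₀ + 1 ≤ acnt A n → 2 * acnt A n ≤ acnt A (K * n) + 1 := by
    intro n hn
    set m := acnt A n - 1 with hm
    have h1 : seqA A m ≤ n := (seqA_le_iff A hA m n).2 (by omega)
    have h2 : seqA A (2 * m) ≤ K * n :=
      le_trans (hKn m (by omega)) (Nat.mul_le_mul_left K h1)
    have h3 : 2 * m < acnt A (K * n) := (seqA_le_iff A hA (2 * m) (K * n)).1 h2
    omega
  have hdiv : Tendsto (fun n : ℕ => n / K) atTop atTop := by
    apply tendsto_atTop.2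
    intro b
    rw [eventually_atTop]
    exact ⟨b * K, fun n hn => (Nat.le_div_iff_mul_le (by omega)).2 hn⟩
  have hev : ∀ᶠ n : ℕ in atTop,
      N₀ + 1 ≤ acnt A (n / K) ∧ 2 ≤ acnt A n ∧ 1 ≤ n := by
    filter_upwards [((acnt_tendsto A hA).comp hdiv).eventually_ge_atTop (N₀ + 1),
      (acnt_tendsto A hA).eventually_ge_atTop 2, eventually_ge_atTop 1]
      with n h1 h2 h3
    exact ⟨h1, h2, h3⟩
  obtain ⟨n₁, hn₁⟩ := eventually_atTop.1 hev
  have claim : ∀ n : ℕ, SA A n ≤ 4 * K * acnt A n + (n₁ + 1) := by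
    intro n
    induction n using Nat.strong_induction_on with
    | _ n IH =>
      by_cases hcase : n < n₁
      · have hS : SA A n ≤ (n : ℝ) + 1 := by
          rw [SA]
          calc ∑ k ∈ range (n + 1), alphaA A k ≤ ∑ k ∈ range (n + 1), (1 : ℝ) :=
            Finset.sum_le_sum fun k _ => alphaA_le_one A k
          _ = (n : ℝ) + 1 := by simp
        have h0 : (0:ℝ) ≤ 4 * K * acnt A n := by positivity
        have : (n : ℝ) + 1 ≤ (n₁ : ℝ) := by exact_mod_cast hcase
        linarith
      · push_neg at hcase
        obtain ⟨ha, hb, hc1⟩ := hn₁ n hcase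
        have hn' : n / K < n := Nat.div_lt_self (by omega) (by omega)
        have IH' := IH _ hn'
        have hblock := SA_block A K (by omega) n
        have hc2 := claim2 (n / K) ha
        have hmono : acnt A (K * (n / K)) ≤ acnt A n :=
          acnt_mono A (by rw [mul_comm]; exact Nat.div_mul_le_self n K)
        have hnat : 2 * acnt A (n / K) ≤ acnt A n + 1 := by omega
        have hyx : 2 * (acnt A (n / K) : ℝ) ≤ (acnt A n : ℝ) + 1 := by
          exact_mod_cast hnat
        have hx2 : (2 : ℝ) ≤ (acnt A n : ℝ) := by exact_mod_cast hb
        have hK2' : (2 : ℝ) ≤ (K : ℝ) := by exact_mod_cast hK2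
        have hprod1 : (K : ℝ) * (2 * (acnt A (n / K) : ℝ)) ≤ (K : ℝ) * ((acnt A n : ℝ) + 1) :=
          mul_le_mul_of_nonneg_left hyx (by linarith)
        have hprod2 : (0 : ℝ) ≤ ((acnt A n : ℝ) - 2) * K := by
          apply mul_nonneg (by linarith) (by linarith)
        nlinarith [IH', hblock]
  refine ⟨4 * K + n₁ + 2, by positivity, ?_⟩
  filter_upwards [(acnt_tendsto A hA).eventually_ge_atTop (n₁ + 2)] with n hn
  have hx1 : (1 : ℝ) ≤ (acnt A n : ℝ) := by
    have : 1 ≤ acnt A n := by omega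
    exact_mod_cast this
  have hcl := claim n
  have hprod : (0:ℝ) ≤ ((n₁ : ℝ) + 2) * ((acnt A n : ℝ) - 1) := by
    apply mul_nonneg (by positivity) (by linarith)
  nlinarith [hcl]

/-- finsets of card h summing to n -/
noncomputable def FF (h n : ℕ) : Finset (Finset ℕ) :=
  (range (n + 1)).powerset.filter (fun s => s.card = h ∧ ∑ k ∈ s, k = n)

open Classical in
/-- tuples summing to n -/
noncomputable def TT (h n : ℕ) : Finset (Fin h → ℕ) :=
  (Fintype.piFinset fun _ => range (n + 1)).filter (fun t => ∑ i, t i = n)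

lemma mem_FF {h n : ℕ} {s : Finset ℕ} :
    s ∈ FF h n ↔ s.card = h ∧ ∑ k ∈ s, k = n := by
  rw [FF, mem_filter, mem_powerset]
  constructor
  · exact fun h => h.2
  · intro hs
    refine ⟨fun k hk => ?_, hs⟩
    rw [mem_range, Nat.lt_succ_iff, ← hs.2]
    exact Finset.single_le_sum (f := fun k : ℕ => k) (fun i _ => Nat.zero_le i) hk

lemma mem_TT {h n : ℕ} {t : Fin h → ℕ} :
    t ∈ TT h n ↔ ∑ i, t i = n := by
  classical
  rw [TT, mem_filter, Fintype.mem_piFinset]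
  constructor
  · exact fun h => h.2
  · intro ht
    refine ⟨fun i => ?_, ht⟩
    rw [mem_range, Nat.lt_succ_iff, ← ht]
    exact Finset.single_le_sum (f := fun i => t i) (fun i _ => Nat.zero_le _) (mem_univ i)

lemma rhoA_eq (B : Set ℕ) [DecidablePred (· ∈ B)] (h n : ℕ) :
    rhoA B h n = ((FF h n).filter (fun s => ∀ k ∈ s, k ∈ B)).card := by
  rw [rhoA, ← Set.ncard_coe_finset]
  congr 1
  ext s
  simp only [Finset.coe_filter, Set.mem_setOf_eq, mem_FF]
  constructor
  · rintro ⟨h1, h2, h3⟩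
    exact ⟨⟨h2, h3⟩, fun k hk => h1 hk⟩
  · rintro ⟨⟨h2, h3⟩, h1⟩
    exact ⟨fun k hk => h1 k hk, h2, h3⟩

lemma rA_eq (B : Set ℕ) [DecidablePred (· ∈ B)] (h n : ℕ) :
    rA B h n = ((TT h n).filter (fun t => ∀ i, t i ∈ B)).card := by
  classical
  rw [rA, ← Set.ncard_coe_finset]
  congr 1
  ext t
  simp only [Finset.coe_filter, Set.mem_setOf_eq, mem_TT]
  tauto

lemma measurable_event (s : Finset ℕ) :
    MeasurableSet {ω : ℕ → Bool | ∀ k ∈ s, ω k = true} := by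
  have : {ω : ℕ → Bool | ∀ k ∈ s, ω k = true} =
      ⋂ k ∈ (s : Set ℕ), (fun ω : ℕ → Bool => ω k) ⁻¹' {true} := by
    ext ω; simp
  rw [this]
  exact MeasurableSet.biInter s.countable_toSet
    (fun k _ => (measurable_pi_apply k) (measurableSet_singleton true))

section Integrals
variable {A : Set ℕ} {μ : Measure (ℕ → Bool)}

lemma event_indicator (s : Finset ℕ) :
    (fun ω : ℕ → Bool => if (∀ k ∈ s, ω k = true) then (1 : ℝ) else 0) =
      Set.indicator {ω : ℕ → Bool | ∀ k ∈ s, ω k = true} (fun _ => 1) := by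
  funext ω
  rw [Set.indicator_apply]
  by_cases hP : ∀ k ∈ s, ω k = true <;> simp [hP, Set.mem_setOf_eq]

lemma integrable_event [IsProbabilityMeasure μ] (s : Finset ℕ) :
    Integrable (fun ω : ℕ → Bool => if (∀ k ∈ s, ω k = true) then (1 : ℝ) else 0) μ := by
  rw [event_indicator]
  exact (integrable_const (1 : ℝ)).indicator (measurable_event s)

lemma integral_event [IsProbabilityMeasure μ]
    (hb : ∀ s : Finset ℕ, μ {ω | ∀ k ∈ s, ω k = true} = ∏ k ∈ s, ENNReal.ofReal (alphaA A k))
    (s : Finset ℕ) :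
    ∫ ω, (if (∀ k ∈ s, ω k = true) then (1 : ℝ) else 0) ∂μ = ∏ k ∈ s, alphaA A k := by
  rw [event_indicator, integral_indicator (measurable_event s), setIntegral_const,
    smul_eq_mul, mul_one, measureReal_def, hb s, ENNReal.toReal_prod]
  exact Finset.prod_congr rfl fun k _ => ENNReal.toReal_ofReal (alphaA_nonneg A k)

lemma Erho [IsProbabilityMeasure μ]
    (hb : ∀ s : Finset ℕ, μ {ω | ∀ k ∈ s, ω k = true} = ∏ k ∈ s, ENNReal.ofReal (alphaA A k))
    (h n : ℕ) :
    ∫ ω, (rhoA {m | ω m = true} h n : ℝ) ∂μ = ∑ s ∈ FF h n, ∏ k ∈ s, alphaA A k := by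
  classical
  have key : ∀ ω : ℕ → Bool, (rhoA {m | ω m = true} h n : ℝ) =
      ∑ s ∈ FF h n, if (∀ k ∈ s, ω k = true) then (1 : ℝ) else 0 := by
    intro ω
    rw [rhoA_eq _ h n, Finset.card_filter]
    push_cast
    apply Finset.sum_congr rfl
    intro s _
    congr 1
  simp only [key]
  rw [integral_finset_sum _ (fun s _ => integrable_event s)]
  exact Finset.sum_congr rfl fun s _ => integral_event hb s

lemma Er [IsProbabilityMeasure μ]
    (hb : ∀ s : Finset ℕ, μ {ω | ∀ k ∈ s, ω k = true} = ∏ k ∈ s, ENNReal.ofReal (alphaA A k))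
    (h n : ℕ) :
    ∫ ω, (rA {m | ω m = true} h n : ℝ) ∂μ =
      ∑ t ∈ TT h n, ∏ k ∈ Finset.image t Finset.univ, alphaA A k := by
  classical
  have key : ∀ ω : ℕ → Bool, (rA {m | ω m = true} h n : ℝ) =
      ∑ t ∈ TT h n, if (∀ k ∈ Finset.image t Finset.univ, ω k = true) then (1 : ℝ) else 0 := by
    intro ω
    rw [rA_eq _ h n, Finset.card_filter]
    push_cast
    apply Finset.sum_congr rfl
    intro t _
    have : (∀ i, t i ∈ {m | ω m = true}) ↔ (∀ k ∈ Finset.image t Finset.univ, ω k = true) := by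
      simp [Set.mem_setOf_eq]
    rw [if_congr this rfl rfl]
  simp only [key]
  rw [integral_finset_sum _ (fun t _ => integrable_event (Finset.image t Finset.univ))]
  exact Finset.sum_congr rfl fun t _ => integral_event hb _

end Integrals

open Classical in
lemma image_orderEmbOfFin {s : Finset ℕ} {h : ℕ} (hcard : s.card = h) :
    Finset.image (fun i => s.orderEmbOfFin hcard i) Finset.univ = s := by
  apply Finset.coe_injective
  rw [coe_image, coe_univ, Set.image_univ]
  exact s.range_orderEmbOfFin hcard

open Classical in
lemma sum_emb {s : Finset ℕ} {h : ℕ} (hcard : s.card = h) :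
    ∑ i : Fin h, (s.orderEmbOfFin hcard) i = ∑ k ∈ s, k := by
  have := Finset.sum_image (s := (Finset.univ : Finset (Fin h)))
    (g := fun i => s.orderEmbOfFin hcard i) (f := fun k : ℕ => k)
    (fun x _ y _ e => (s.orderEmbOfFin hcard).injective e)
  rw [image_orderEmbOfFin hcard] at this
  exact this.symm

open Classical in
lemma fiber_eq {h n : ℕ} {s : Finset ℕ} (hs : s ∈ FF h n) :
    ((TT h n).filter (fun t => Function.Injective t)).filter
        (fun t => Finset.image t Finset.univ = s) =
      Finset.image (fun σ : Equiv.Perm (Fin h) => fun i => s.orderEmbOfFin (mem_FF.1 hs).1 (σ i))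
        Finset.univ := by
  obtain ⟨hcard, hsum⟩ := mem_FF.1 hs
  ext t
  simp only [mem_filter, Finset.mem_image, mem_univ, true_and]
  constructor
  · rintro ⟨⟨htT, htinj⟩, htim⟩
    have hmem : ∀ i, t i ∈ s := by
      intro i
      rw [← htim]
      exact Finset.mem_image_of_mem t (mem_univ i)
    set g : Fin h → Fin h := fun i => (s.orderIsoOfFin hcard).symm ⟨t i, hmem i⟩ with hg
    have hginj : Function.Injective g := by
      intro a b hab
      have h2 : ((s.orderIsoOfFin hcard) (g a) : ℕ) = ((s.orderIsoOfFin hcard) (g b) : ℕ) :=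
        congrArg (fun x => ((s.orderIsoOfFin hcard) x : ℕ)) hab
      simp only [hg, OrderIso.apply_symm_apply] at h2
      exact htinj h2
    refine ⟨Equiv.ofBijective g (Finite.injective_iff_bijective.1 hginj), ?_⟩
    funext i
    show (s.orderEmbOfFin hcard) (g i) = t i
    rw [hg]
    rw [← Finset.coe_orderIsoOfFin_apply]
    simp
  · rintro ⟨σ, rfl⟩
    have hinj : Function.Injective (fun i => s.orderEmbOfFin hcard (σ i)) :=
      (s.orderEmbOfFin hcard).injective.comp σ.injective
    have him : Finset.image (fun i => s.orderEmbOfFin hcard (σ i)) Finset.univ = s := by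
      apply Finset.coe_injective
      rw [coe_image, coe_univ, Set.image_univ]
      have : Set.range (fun i => s.orderEmbOfFin hcard (σ i)) = ↑s := by
        have := σ.surjective.range_comp (fun i => s.orderEmbOfFin hcard i)
        rw [Function.comp_def] at this
        rw [this]
        exact s.range_orderEmbOfFin hcard
      exact this
    refine ⟨⟨?_, hinj⟩, him⟩
    rw [mem_TT]
    rw [Equiv.sum_comp σ (fun i => s.orderEmbOfFin hcard i), sum_emb hcard, hsum]

open Classical in
lemma sum_inj (A : Set ℕ) (h n : ℕ) :
    ∑ t ∈ (TT h n).filter (fun t => Function.Injective t),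
        ∏ k ∈ Finset.image t Finset.univ, alphaA A k
      = (h.factorial : ℝ) * ∑ s ∈ FF h n, ∏ k ∈ s, alphaA A k := by
  rw [Finset.sum_comp (fun s : Finset ℕ => ∏ k ∈ s, alphaA A k)
    (fun t : Fin h → ℕ => Finset.image t Finset.univ)]
  have himg : ((TT h n).filter (fun t => Function.Injective t)).image
      (fun t => Finset.image t Finset.univ) = FF h n := by
    ext s
    rw [Finset.mem_image]
    constructor
    · rintro ⟨t, htI, rfl⟩
      obtain ⟨htT, htinj⟩ := Finset.mem_filter.1 htI
      rw [mem_FF]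
      constructor
      · rw [Finset.card_image_of_injective _ htinj, card_univ, Fintype.card_fin]
      · rw [Finset.sum_image (fun x _ y _ e => htinj e)]
        exact mem_TT.1 htT
    · intro hs
      obtain ⟨hcard, hsum⟩ := mem_FF.1 hs
      refine ⟨fun i => s.orderEmbOfFin hcard i, ?_, image_orderEmbOfFin hcard⟩
      rw [Finset.mem_filter]
      refine ⟨?_, (s.orderEmbOfFin hcard).injective⟩
      rw [mem_TT, sum_emb hcard, hsum]
  rw [himg, Finset.mul_sum]
  apply Finset.sum_congr rfl
  intro s hs
  have hfib := fiber_eq hs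
  have hcardfib : (((TT h n).filter (fun t => Function.Injective t)).filter
      (fun t => Finset.image t Finset.univ = s)).card = h.factorial := by
    rw [hfib, Finset.card_image_of_injective _ ?hinj, card_univ, Fintype.card_perm,
      Fintype.card_fin]
    case hinj =>
      intro σ₁ σ₂ he
      ext i
      have h2 := congrFun he i
      exact congrArg Fin.val ((s.orderEmbOfFin (mem_FF.1 hs).1).injective h2)
  rw [show {t ∈ (TT h n).filter fun t => Function.Injective t |
        Finset.image t Finset.univ = s} =
      ((TT h n).filter (fun t => Function.Injective t)).filter
        (fun t => Finset.image t Finset.univ = s) from rfl, hcardfib]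
  rw [nsmul_eq_mul]

lemma sum_le_sum_inj {α β : Type*} [DecidableEq β] (s : Finset α) (t : Finset β)
    (f : α → ℝ) (g : β → ℝ) (e : α → β)
    (hinj : Set.InjOn e ↑s) (hmaps : ∀ a ∈ s, e a ∈ t) (heq : ∀ a ∈ s, f a = g (e a))
    (hg : ∀ b ∈ t, 0 ≤ g b) : ∑ a ∈ s, f a ≤ ∑ b ∈ t, g b := by
  calc ∑ a ∈ s, f a = ∑ a ∈ s, g (e a) := Finset.sum_congr rfl heq
    _ = ∑ b ∈ s.image e, g b :=
        (Finset.sum_image (fun x hx y hy hxy => hinj hx hy hxy)).symm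
    _ ≤ ∑ b ∈ t, g b := Finset.sum_le_sum_of_subset_of_nonneg
        (Finset.image_subset_iff.2 hmaps) (fun b hb _ => hg b hb)

lemma sum_powersetCard (U : Finset ℕ) (f : ℕ → ℝ) (hf : ∀ k, 0 ≤ f k) :
    ∀ c : ℕ, ∑ s ∈ Finset.powersetCard c U, ∏ k ∈ s, f k ≤ (∑ k ∈ U, f k) ^ c := by
  intro c
  induction c with
  | zero => simp
  | succ c IH =>
    classical
    set e : Finset ℕ → ℕ × Finset ℕ := fun s =>
      if hs : s.Nonempty then (s.min' hs, s.erase (s.min' hs)) else (0, ∅) with he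
    have key : ∑ s ∈ Finset.powersetCard (c + 1) U, ∏ k ∈ s, f k ≤
        ∑ p ∈ U ×ˢ Finset.powersetCard c U, f p.1 * ∏ k ∈ p.2, f k := by
      apply sum_le_sum_inj _ _ _ _ e
      · intro s hs s' hs' hee
        rw [Finset.mem_coe, Finset.mem_powersetCard] at hs hs'
        have hne : s.Nonempty := Finset.card_pos.1 (by omega)
        have hne' : s'.Nonempty := Finset.card_pos.1 (by omega)
        rw [he] at hee
        simp only [dif_pos hne, dif_pos hne'] at hee
        have h1 : s.min' hne = s'.min' hne' := congrArg Prod.fst hee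
        have h2 : s.erase (s.min' hne) = s'.erase (s'.min' hne') := congrArg Prod.snd hee
        calc s = insert (s.min' hne) (s.erase (s.min' hne)) :=
              (Finset.insert_erase (s.min'_mem hne)).symm
          _ = insert (s'.min' hne') (s'.erase (s'.min' hne')) := by rw [h2, h1]
          _ = s' := Finset.insert_erase (s'.min'_mem hne')
      · intro s hs
        rw [Finset.mem_powersetCard] at hs
        have hne : s.Nonempty := Finset.card_pos.1 (by omega)
        rw [he]
        simp only [dif_pos hne]
        rw [Finset.mem_product]
        refine ⟨hs.1 (s.min'_mem hne), ?_⟩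
        rw [Finset.mem_powersetCard]
        refine ⟨(s.erase_subset _).trans hs.1, ?_⟩
        rw [Finset.card_erase_of_mem (s.min'_mem hne)]
        omega
      · intro s hs
        rw [Finset.mem_powersetCard] at hs
        have hne : s.Nonempty := Finset.card_pos.1 (by omega)
        rw [he]
        simp only [dif_pos hne]
        exact (Finset.mul_prod_erase s f (s.min'_mem hne)).symm
      · intro b _
        exact mul_nonneg (hf _) (Finset.prod_nonneg fun k _ => hf k)
    calc ∑ s ∈ Finset.powersetCard (c + 1) U, ∏ k ∈ s, f k
        ≤ ∑ p ∈ U ×ˢ Finset.powersetCard c U, f p.1 * ∏ k ∈ p.2, f k := key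
      _ = (∑ k ∈ U, f k) * ∑ s ∈ Finset.powersetCard c U, ∏ k ∈ s, f k := by
          simp only [Finset.sum_product]
          rw [← Finset.sum_mul_sum U (Finset.powersetCard c U) f (fun s => ∏ k ∈ s, f k)]
      _ ≤ (∑ k ∈ U, f k) * (∑ k ∈ U, f k) ^ c :=
          mul_le_mul_of_nonneg_left IH (Finset.sum_nonneg fun k _ => hf k)
      _ = (∑ k ∈ U, f k) ^ (c + 1) := by ring

open Classical in
lemma Ebad_bound (A : Set ℕ) (h : ℕ) (hh : 2 ≤ h) (n : ℕ) (hn : 1 ≤ n) :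
    ∑ t ∈ (TT h n).filter (fun t => ¬ Function.Injective t),
        ∏ k ∈ Finset.image t Finset.univ, alphaA A k
      ≤ ((h : ℝ) * ((h : ℝ) + 1) ^ h * ((h : ℝ) - 1)) * ((acnt A n : ℝ) / n) *
          (1 + SA A n) ^ (h - 2) := by
  haveI : Nonempty (Fin h) := ⟨⟨0, by omega⟩⟩
  set B := (TT h n).filter (fun t => ¬ Function.Injective t) with hB
  set Mx : (Fin h → ℕ) → ℕ :=
    fun t => (Finset.image t Finset.univ).max' (Finset.univ_nonempty.image t) with hMx
  set ψ : (Fin h → ℕ) → Finset ℕ :=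
    fun t => (Finset.image t Finset.univ).erase (Mx t) with hψ
  -- basic facts about tuples in TT
  have fact1 : ∀ t : Fin h → ℕ, Mx t ∈ Finset.image t Finset.univ :=
    fun t => Finset.max'_mem _ _
  have fact2 : ∀ (t : Fin h → ℕ) (i : Fin h), t i ≤ Mx t :=
    fun t i => Finset.le_max' _ _ (Finset.mem_image_of_mem t (mem_univ i))
  have factle : ∀ t ∈ TT h n, ∀ i, t i ≤ n := by
    intro t ht i
    rw [← mem_TT.1 ht]
    exact Finset.single_le_sum (f := fun i => t i) (fun j _ => Nat.zero_le _) (mem_univ i)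
  have fact3 : ∀ t ∈ TT h n, Mx t ≤ n := by
    intro t ht
    obtain ⟨i, _, hi⟩ := Finset.mem_image.1 (fact1 t)
    rw [← hi]; exact factle t ht i
  have fact4 : ∀ t ∈ TT h n, n ≤ h * Mx t := by
    intro t ht
    calc n = ∑ i, t i := (mem_TT.1 ht).symm
      _ ≤ ∑ _i : Fin h, Mx t := Finset.sum_le_sum fun i _ => fact2 t i
      _ = h * Mx t := by rw [Finset.sum_const, card_univ, Fintype.card_fin, smul_eq_mul]
  -- step 1 : pointwise bound
  have step1 : ∀ t ∈ B, ∏ k ∈ Finset.image t Finset.univ, alphaA A k ≤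
      ((h : ℝ) * acnt A n / n) * ∏ k ∈ ψ t, alphaA A k := by
    intro t htB
    have htT : t ∈ TT h n := (Finset.mem_filter.1 htB).1
    have hsplit : ∏ k ∈ Finset.image t Finset.univ, alphaA A k =
        alphaA A (Mx t) * ∏ k ∈ ψ t, alphaA A k :=
      (Finset.mul_prod_erase _ _ (fact1 t)).symm
    rw [hsplit]
    apply mul_le_mul_of_nonneg_right _ (Finset.prod_nonneg fun k _ => alphaA_nonneg A k)
    rw [alphaA_eq]
    rw [div_le_div_iff₀ (by positivity) (by positivity : (0:ℝ) < n)]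
    have hA1 : (acnt A (Mx t) : ℝ) ≤ (acnt A n : ℝ) := by
      exact_mod_cast acnt_mono A (fact3 t htT)
    have hA2 : (n : ℝ) ≤ (h : ℝ) * ((Mx t : ℝ) + 1) := by
      have h4 : (n : ℝ) ≤ (h : ℝ) * (Mx t : ℝ) := by exact_mod_cast fact4 t htT
      have hh0 : (0:ℝ) ≤ (h:ℝ) := by positivity
      nlinarith
    have key := mul_le_mul hA1 hA2 (by positivity) (by positivity)
    nlinarith [key]
  have step2 : ∑ t ∈ B, ∏ k ∈ Finset.image t Finset.univ, alphaA A k ≤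
      ((h : ℝ) * acnt A n / n) * ∑ t ∈ B, ∏ k ∈ ψ t, alphaA A k := by
    rw [Finset.mul_sum]
    exact Finset.sum_le_sum step1
  -- step 3 : group by ψ
  have step3 : ∑ t ∈ B, ∏ k ∈ ψ t, alphaA A k =
      ∑ s' ∈ B.image ψ, (B.filter (fun t => ψ t = s')).card • ∏ k ∈ s', alphaA A k :=
    Finset.sum_comp (fun s' : Finset ℕ => ∏ k ∈ s', alphaA A k) ψ
  -- step 4 : fiber card bound
  have step4 : ∀ s' ∈ B.image ψ, (B.filter (fun t => ψ t = s')).card ≤ (h + 1) ^ h := by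
    intro s' hs'
    have hcard_le : s'.card ≤ h := by
      obtain ⟨t, _, rfl⟩ := Finset.mem_image.1 hs'
      calc (ψ t).card ≤ (Finset.image t Finset.univ).card := Finset.card_le_card (erase_subset _ _)
        _ ≤ Finset.univ.card := Finset.card_image_le
        _ = h := by rw [card_univ, Fintype.card_fin]
    set p : (Fin h → ℕ) → (Fin h → ℕ) := fun t i => if t i ∈ s' then t i else n + 1 with hp
    -- characterization for fiber members
    have gen : ∀ t : Fin h → ℕ, t ∈ B → ψ t = s' →
        (∀ i, (p t i = n + 1 ↔ t i = Mx t)) ∧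
        (Finset.univ.filter (fun i => p t i = n + 1)).card * Mx t +
          ∑ i ∈ Finset.univ.filter (fun i => ¬ p t i = n + 1), p t i = n ∧
        1 ≤ (Finset.univ.filter (fun i => p t i = n + 1)).card := by
      intro t htB hψt
      have htT : t ∈ TT h n := (Finset.mem_filter.1 htB).1
      have hMnotin : Mx t ∉ s' := by rw [← hψt]; exact Finset.notMem_erase _ _
      have himg : Finset.image t Finset.univ = insert (Mx t) s' := by
        rw [← hψt]
        exact (Finset.insert_erase (fact1 t)).symm
      have hval : ∀ i, t i = Mx t ∨ t i ∈ s' := by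
        intro i
        have : t i ∈ Finset.image t Finset.univ := Finset.mem_image_of_mem t (mem_univ i)
        rw [himg, Finset.mem_insert] at this
        exact this
      have hchar : ∀ i, (p t i = n + 1 ↔ t i = Mx t) := by
        intro i
        by_cases hin : t i ∈ s'
        · have hpi : p t i = t i := by simp only [hp]; rw [if_pos hin]
          rw [hpi]
          constructor
          · intro he
            exfalso
            have := factle t htT i
            omega
          · intro he
            exact absurd (he ▸ hin) hMnotin
        · have hpi : p t i = n + 1 := by simp only [hp]; rw [if_neg hin]
          rw [hpi]
          constructor
          · intro _
            rcases hval i with h1 | h1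
            · exact h1
            · exact absurd h1 hin
          · intro _; rfl
      refine ⟨hchar, ?_, ?_⟩
      · have hsum := mem_TT.1 htT
        have hsp := Finset.sum_filter_add_sum_filter_not Finset.univ
          (fun i => p t i = n + 1) (fun i => t i)
        have h1 : ∑ i ∈ Finset.univ.filter (fun i => p t i = n + 1), t i =
            (Finset.univ.filter (fun i => p t i = n + 1)).card * Mx t := by
          rw [Finset.sum_congr rfl (fun i hi => (hchar i).1 (Finset.mem_filter.1 hi).2),
            Finset.sum_const, smul_eq_mul]
        have h2 : ∑ i ∈ Finset.univ.filter (fun i => ¬ p t i = n + 1), t i =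
            ∑ i ∈ Finset.univ.filter (fun i => ¬ p t i = n + 1), p t i := by
          apply Finset.sum_congr rfl
          intro i hi
          have hne := (Finset.mem_filter.1 hi).2
          by_cases hin : t i ∈ s'
          · simp only [hp]
            rw [if_pos hin]
          · exfalso
            apply hne
            simp only [hp]
            rw [if_neg hin]
        rw [h1, h2] at hsp
        rw [hsp, hsum]
      · rw [Nat.succ_le_iff, Finset.card_pos]
        obtain ⟨i, _, hi⟩ := Finset.mem_image.1 (fact1 t)
        exact ⟨i, Finset.mem_filter.2 ⟨mem_univ i, (hchar i).2 hi⟩⟩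
    -- injectivity of p on the fiber
    have hinj : Set.InjOn p ↑(B.filter (fun t => ψ t = s')) := by
      intro t1 ht1 t2 ht2 hpe
      rw [Finset.mem_coe, Finset.mem_filter] at ht1 ht2
      obtain ⟨hc1, he1, hk1⟩ := gen t1 ht1.1 ht1.2
      obtain ⟨hc2, he2, hk2⟩ := gen t2 ht2.1 ht2.2
      rw [hpe] at he1 hk1
      have hMeq : Mx t1 = Mx t2 := by
        have hmul : (Finset.univ.filter (fun i => p t2 i = n + 1)).card * Mx t1 =
            (Finset.univ.filter (fun i => p t2 i = n + 1)).card * Mx t2 := by omega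
        exact Nat.eq_of_mul_eq_mul_left (by omega) hmul
      funext i
      by_cases hcase : p t2 i = n + 1
      · have e1 : t1 i = Mx t1 := (hc1 i).1 (by rw [hpe]; exact hcase)
        have e2 : t2 i = Mx t2 := (hc2 i).1 hcase
        rw [e1, e2, hMeq]
      · have e1 : p t1 i = t1 i := by
          by_cases hin : t1 i ∈ s'
          · show (if t1 i ∈ s' then t1 i else n + 1) = t1 i
            rw [if_pos hin]
          · exfalso
            apply hcase
            rw [← hpe]
            show (if t1 i ∈ s' then t1 i else n + 1) = n + 1
            rw [if_neg hin]
        have e2 : p t2 i = t2 i := by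
          by_cases hin : t2 i ∈ s'
          · show (if t2 i ∈ s' then t2 i else n + 1) = t2 i
            rw [if_pos hin]
          · exfalso
            refine hcase ?_
            show (if t2 i ∈ s' then t2 i else n + 1) = n + 1
            rw [if_neg hin]
        rw [← e1, ← e2, hpe]
    have hmaps : ∀ t ∈ B.filter (fun t => ψ t = s'),
        p t ∈ Fintype.piFinset (fun _ : Fin h => insert (n + 1) s') := by
      intro t _
      rw [Fintype.mem_piFinset]
      intro i
      by_cases hin : t i ∈ s'
      · have hpi : p t i = t i := by simp only [hp]; rw [if_pos hin]
        rw [hpi]; exact Finset.mem_insert_of_mem hin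
      · have hpi : p t i = n + 1 := by simp only [hp]; rw [if_neg hin]
        rw [hpi]; exact Finset.mem_insert_self _ _
    calc (B.filter (fun t => ψ t = s')).card
        ≤ (Fintype.piFinset (fun _ : Fin h => insert (n + 1) s')).card :=
          Finset.card_le_card_of_injOn p hmaps hinj
      _ = (insert (n + 1) s').card ^ h := by
          rw [Fintype.card_piFinset]
          rw [Finset.prod_const, card_univ, Fintype.card_fin]
      _ ≤ (h + 1) ^ h := by
          apply Nat.pow_le_pow_left
          calc (insert (n + 1) s').card ≤ s'.card + 1 := Finset.card_insert_le _ _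
            _ ≤ h + 1 := by omega
  -- step 5 : sum over images
  have step5 : ∑ s' ∈ B.image ψ, ∏ k ∈ s', alphaA A k ≤
      ((h : ℝ) - 1) * (1 + SA A n) ^ (h - 2) := by
    have hsub : B.image ψ ⊆ (range (h - 1)).biUnion
        (fun c => Finset.powersetCard c (range (n + 1))) := by
      intro s' hs'
      obtain ⟨t, htB, rfl⟩ := Finset.mem_image.1 hs'
      have htT : t ∈ TT h n := (Finset.mem_filter.1 htB).1
      have htni : ¬ Function.Injective t := (Finset.mem_filter.1 htB).2
      have himcard : (Finset.image t Finset.univ).card ≤ h - 1 := by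
        have hle : (Finset.image t Finset.univ).card ≤ h := by
          calc (Finset.image t Finset.univ).card ≤ Finset.univ.card := Finset.card_image_le
            _ = h := by rw [card_univ, Fintype.card_fin]
        have hne : (Finset.image t Finset.univ).card ≠ h := by
          intro hcontra
          apply htni
          have : Set.InjOn t ↑(Finset.univ : Finset (Fin h)) := by
            rw [← Finset.card_image_iff]
            rw [hcontra, card_univ, Fintype.card_fin]
          rw [Finset.coe_univ] at this
          exact Set.injOn_univ.1 this
        omega
      have hψcard : (ψ t).card ≤ h - 2 := by
        rw [hψ]
        simp only
        rw [Finset.card_erase_of_mem (fact1 t)]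
        omega
      rw [Finset.mem_biUnion]
      refine ⟨(ψ t).card, ?_, ?_⟩
      · rw [Finset.mem_range]; omega
      · rw [Finset.mem_powersetCard]
        refine ⟨?_, rfl⟩
        intro x hx
        have hx2 : x ∈ Finset.image t Finset.univ := Finset.erase_subset _ _ hx
        obtain ⟨i, _, hi⟩ := Finset.mem_image.1 hx2
        rw [Finset.mem_range, Nat.lt_succ_iff, ← hi]
        exact factle t htT i
    have hdisj : (↑(range (h - 1)) : Set ℕ).PairwiseDisjoint
        (fun c => Finset.powersetCard c (range (n + 1))) := by
      intro c1 _ c2 _ hne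
      simp only [Function.onFun]
      rw [Finset.disjoint_left]
      intro s hs1 hs2
      rw [Finset.mem_powersetCard] at hs1 hs2
      exact hne (hs1.2 ▸ hs2.2)
    calc ∑ s' ∈ B.image ψ, ∏ k ∈ s', alphaA A k
        ≤ ∑ s' ∈ (range (h - 1)).biUnion (fun c => Finset.powersetCard c (range (n + 1))),
            ∏ k ∈ s', alphaA A k :=
          Finset.sum_le_sum_of_subset_of_nonneg hsub
            (fun s' _ _ => Finset.prod_nonneg fun k _ => alphaA_nonneg A k)
      _ = ∑ c ∈ range (h - 1), ∑ s' ∈ Finset.powersetCard c (range (n + 1)),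
            ∏ k ∈ s', alphaA A k := Finset.sum_biUnion hdisj
      _ ≤ ∑ c ∈ range (h - 1), (1 + SA A n) ^ (h - 2) := by
          apply Finset.sum_le_sum
          intro c hc
          have h1 := sum_powersetCard (range (n + 1)) (alphaA A) (alphaA_nonneg A) c
          have hS : ∑ k ∈ range (n + 1), alphaA A k = SA A n := rfl
          rw [hS] at h1
          have hS0 : 0 ≤ SA A n := Finset.sum_nonneg fun k _ => alphaA_nonneg A k
          calc ∑ s' ∈ Finset.powersetCard c (range (n + 1)), ∏ k ∈ s', alphaA A k
              ≤ (SA A n) ^ c := h1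
            _ ≤ (1 + SA A n) ^ c := pow_le_pow_left₀ hS0 (by linarith) c
            _ ≤ (1 + SA A n) ^ (h - 2) := by
                apply pow_le_pow_right₀ (by linarith)
                rw [Finset.mem_range] at hc
                omega
      _ = ((h : ℝ) - 1) * (1 + SA A n) ^ (h - 2) := by
          rw [Finset.sum_const, card_range, nsmul_eq_mul]
          congr 1
          have : ((h - 1 : ℕ) : ℝ) = (h : ℝ) - 1 := by
            have : 1 ≤ h := by omega
            push_cast [this]
            ring
          exact this
  -- combine
  have hpre : (0:ℝ) ≤ (h : ℝ) * acnt A n / n := by positivity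
  have hfib : ∑ s' ∈ B.image ψ, (B.filter (fun t => ψ t = s')).card • ∏ k ∈ s', alphaA A k ≤
      (((h + 1) ^ h : ℕ) : ℝ) * ∑ s' ∈ B.image ψ, ∏ k ∈ s', alphaA A k := by
    rw [Finset.mul_sum]
    apply Finset.sum_le_sum
    intro s' hs'
    rw [nsmul_eq_mul]
    apply mul_le_mul_of_nonneg_right _ (Finset.prod_nonneg fun k _ => alphaA_nonneg A k)
    exact_mod_cast step4 s' hs'
  have hSpos : (0:ℝ) ≤ (1 + SA A n) ^ (h - 2) := by
    have hS0 : 0 ≤ SA A n := Finset.sum_nonneg fun k _ => alphaA_nonneg A k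
    positivity
  calc ∑ t ∈ B, ∏ k ∈ Finset.image t Finset.univ, alphaA A k
      ≤ ((h : ℝ) * acnt A n / n) * ∑ t ∈ B, ∏ k ∈ ψ t, alphaA A k := step2
    _ ≤ ((h : ℝ) * acnt A n / n) *
        ((((h + 1) ^ h : ℕ) : ℝ) * ∑ s' ∈ B.image ψ, ∏ k ∈ s', alphaA A k) := by
        apply mul_le_mul_of_nonneg_left _ hpre
        rw [step3]
        exact hfib
    _ ≤ ((h : ℝ) * acnt A n / n) *
        ((((h + 1) ^ h : ℕ) : ℝ) * (((h : ℝ) - 1) * (1 + SA A n) ^ (h - 2))) := by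
        apply mul_le_mul_of_nonneg_left _ hpre
        apply mul_le_mul_of_nonneg_left step5 (by positivity)
    _ = ((h : ℝ) * ((h : ℝ) + 1) ^ h * ((h : ℝ) - 1)) * ((acnt A n : ℝ) / n) *
          (1 + SA A n) ^ (h - 2) := by
        push_cast
        ring

theorem stmt_4 (A : Set ℕ) (hA : ORplus A) (h : ℕ) (hh : 2 ≤ h)
    (μ : Measure (ℕ → Bool))
    (hμ : IsBernoulliProduct μ (fun n => (cntA A n : ℝ) / (n + 1))) :
    (fun n : ℕ => (∫ ω, (rhoA {m | ω m = true} h n : ℝ) ∂μ) -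
        (1 / (h.factorial : ℝ)) * ∫ ω, (rA {m | ω m = true} h n : ℝ) ∂μ)
      =O[atTop] (fun n : ℕ => (cntA A n : ℝ) ^ (h - 1) / n) := by
  classical
  obtain ⟨hInf, _hOR, hPI⟩ := hA
  haveI hprob : IsProbabilityMeasure μ := hμ.1
  have hb : ∀ s : Finset ℕ, μ {ω | ∀ k ∈ s, ω k = true} =
      ∏ k ∈ s, ENNReal.ofReal (alphaA A k) := by
    intro s
    have h2 := hμ.2 s (fun _ => true)
    simpa [alphaA] using h2
  have hiden : ∀ n : ℕ, (∫ ω, (rhoA {m | ω m = true} h n : ℝ) ∂μ) -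
      (1 / (h.factorial : ℝ)) * ∫ ω, (rA {m | ω m = true} h n : ℝ) ∂μ
      = -(1 / (h.factorial : ℝ)) *
        ∑ t ∈ (TT h n).filter (fun t => ¬ Function.Injective t),
          ∏ k ∈ Finset.image t Finset.univ, alphaA A k := by
    intro n
    rw [Erho hb h n, Er hb h n,
      ← Finset.sum_filter_add_sum_filter_not (TT h n) (fun t => Function.Injective t),
      sum_inj A h n]
    have hfac : (h.factorial : ℝ) ≠ 0 := Nat.cast_ne_zero.2 h.factorial_ne_zero
    field_simp
    ring
  obtain ⟨D, hD0, hDev⟩ := lemB A hInf hPI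
  rw [isBigO_iff]
  refine ⟨(h : ℝ) * ((h : ℝ) + 1) ^ h * ((h : ℝ) - 1) * D ^ (h - 2), ?_⟩
  filter_upwards [hDev, eventually_ge_atTop 1] with n hDn hn1
  have hE0 : (0:ℝ) ≤ ∑ t ∈ (TT h n).filter (fun t => ¬ Function.Injective t),
      ∏ k ∈ Finset.image t Finset.univ, alphaA A k :=
    Finset.sum_nonneg fun t _ => Finset.prod_nonneg fun k _ => alphaA_nonneg A k
  have hEb := Ebad_bound A h hh n hn1
  have hS0 : (0:ℝ) ≤ SA A n := Finset.sum_nonneg fun k _ => alphaA_nonneg A k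
  have hh2 : (2:ℝ) ≤ (h:ℝ) := by exact_mod_cast hh
  have hC0 : (0:ℝ) ≤ (h : ℝ) * ((h : ℝ) + 1) ^ h * ((h : ℝ) - 1) := by
    apply mul_nonneg (by positivity) (by linarith)
  have hpowle : (1 + SA A n) ^ (h - 2) ≤ (D * (acnt A n : ℝ)) ^ (h - 2) :=
    pow_le_pow_left₀ (by linarith) hDn _
  have hexp : h - 2 + 1 = h - 1 := by omega
  have hchain : ∑ t ∈ (TT h n).filter (fun t => ¬ Function.Injective t),
      ∏ k ∈ Finset.image t Finset.univ, alphaA A k ≤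
      (h : ℝ) * ((h : ℝ) + 1) ^ h * ((h : ℝ) - 1) * D ^ (h - 2) *
        ((acnt A n : ℝ) ^ (h - 1) / n) := by
    calc ∑ t ∈ (TT h n).filter (fun t => ¬ Function.Injective t),
        ∏ k ∈ Finset.image t Finset.univ, alphaA A k
        ≤ ((h : ℝ) * ((h : ℝ) + 1) ^ h * ((h : ℝ) - 1)) * ((acnt A n : ℝ) / n) *
            (1 + SA A n) ^ (h - 2) := hEb
      _ ≤ ((h : ℝ) * ((h : ℝ) + 1) ^ h * ((h : ℝ) - 1)) * ((acnt A n : ℝ) / n) *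
            (D * (acnt A n : ℝ)) ^ (h - 2) := by
          apply mul_le_mul_of_nonneg_left hpowle
          apply mul_nonneg hC0 (by positivity)
      _ = (h : ℝ) * ((h : ℝ) + 1) ^ h * ((h : ℝ) - 1) * D ^ (h - 2) *
            ((acnt A n : ℝ) ^ (h - 1) / n) := by
          have hpow : ((acnt A n : ℝ)) ^ (h - 1) = ((acnt A n : ℝ)) ^ (h - 2) * acnt A n := by
            rw [← pow_succ, hexp]
          rw [mul_pow, hpow]
          ring
  have hfac1 : (1:ℝ) ≤ (h.factorial : ℝ) := by exact_mod_cast h.factorial_pos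
  have hfacnn : (0:ℝ) ≤ 1 / (h.factorial : ℝ) := by positivity
  rw [hiden n]
  have hnormL : ‖-(1 / (h.factorial : ℝ)) *
      ∑ t ∈ (TT h n).filter (fun t => ¬ Function.Injective t),
        ∏ k ∈ Finset.image t Finset.univ, alphaA A k‖ =
      (1 / (h.factorial : ℝ)) *
      ∑ t ∈ (TT h n).filter (fun t => ¬ Function.Injective t),
        ∏ k ∈ Finset.image t Finset.univ, alphaA A k := by
    rw [Real.norm_eq_abs, abs_mul, abs_neg, abs_of_nonneg hfacnn, abs_of_nonneg hE0]
  rw [hnormL]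
  have hRHS : ‖(cntA A (n:ℝ) : ℝ) ^ (h - 1) / (n:ℝ)‖ = (acnt A n : ℝ) ^ (h - 1) / n := by
    rw [Real.norm_eq_abs, abs_of_nonneg (by positivity)]
    rfl
  rw [hRHS]
  calc (1 / (h.factorial : ℝ)) *
      ∑ t ∈ (TT h n).filter (fun t => ¬ Function.Injective t),
        ∏ k ∈ Finset.image t Finset.univ, alphaA A k
      ≤ 1 * ∑ t ∈ (TT h n).filter (fun t => ¬ Function.Injective t),
          ∏ k ∈ Finset.image t Finset.univ, alphaA A k := by
        apply mul_le_mul_of_nonneg_right _ hE0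
        rw [div_le_one (by linarith)]
        linarith
    _ = ∑ t ∈ (TT h n).filter (fun t => ¬ Function.Injective t),
          ∏ k ∈ Finset.image t Finset.univ, alphaA A k := one_mul _
    _ ≤ _ := hchain
end

section
/- Let 𝒜 ⊆ ℕ be an OR₊ sequence. Then for every integer h ≥ 2, ∑ over all tuples 0 ≤ k₁ < k₂ < ⋯ < k_h with k₁+⋯+k_h = n of the product ∏_{i=1}^{h} A(kᵢ)/(kᵢ+1) is Θ(A(n)^h / n) as n → ∞. -/
open Filter Asymptotics MeasureTheory

/-!
Write `w k = A(k) / (k + 1)`. For the upper bound, the largest element of an `h`-set with sum `n`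
is at least `n / h`, so its weight is at most `h A(n) / n`, while the other `h - 1` elements
contribute at most `(∑_{k ≤ n} w k) ^ (h - 1)`; the PI property yields `2 A(m) ≤ A(F m)`, which
makes this partial sum `O(A(n))`. For the lower bound, put `q = ⌊n / 2h⌋`: every `(h - 1)`-subset
`t` of `[q, 2q)` becomes an `h`-set with sum `n` by adding `n - ∑ t ≥ 2q`. Its elements lie in
`[q, n]`, so each of these `binom(q, h - 1) ≍ n ^ (h - 1)` sets has weight at least
`(A(q) / (n + 1)) ^ h`, and `A(q) ≍ A(n)` by the OR property.
-/

open Finset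

theorem Nat.le_two_mul_mul_div {c n : ℕ} (hc : c ≠ 0) (hcn : c ≤ n) : n ≤ 2 * c * (n / c) := by
  have hle : c ≤ c * (n / c) := Nat.le_mul_of_pos_right c (Nat.div_pos hcn (Nat.pos_of_ne_zero hc))
  have := Nat.div_add_mod n c
  have := Nat.mod_lt n (Nat.pos_of_ne_zero hc)
  rw [mul_assoc]
  omega

theorem Multiset.esymm_le_sum_pow {R : Type*} [CommSemiring R] [PartialOrder R] [IsOrderedRing R]
    {s : Multiset R} (hs : ∀ x ∈ s, 0 ≤ x) (m : ℕ) : s.esymm m ≤ s.sum ^ m := by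
  induction s using Multiset.induction_on generalizing m with
  | empty => cases m <;> simp [Multiset.esymm, Multiset.powersetCard_zero_right]
  | cons a s ih =>
    have ha : 0 ≤ a := hs a (Multiset.mem_cons_self a s)
    have hs' : ∀ x ∈ s, 0 ≤ x := fun x hx => hs x (Multiset.mem_cons_of_mem hx)
    have hsum : 0 ≤ s.sum := Multiset.sum_nonneg hs'
    cases m with
    | zero => simp [Multiset.esymm]
    | succ m =>
      calc (a ::ₘ s).esymm (m + 1) = s.esymm (m + 1) + a * s.esymm m := by
            simp [Multiset.esymm, Multiset.powersetCard_cons, Multiset.map_map,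
              Multiset.sum_map_mul_left]
        _ ≤ s.sum ^ (m + 1) + a * s.sum ^ m := by gcongr <;> exact ih hs' _
        _ = (a + s.sum) * s.sum ^ m := by ring
        _ ≤ (a + s.sum) * (a + s.sum) ^ m := by gcongr; exact le_add_of_nonneg_left ha
        _ = (a ::ₘ s).sum ^ (m + 1) := by rw [Multiset.sum_cons, pow_succ']

theorem Finset.sum_powersetCard_prod_le_pow {α R : Type*} [CommSemiring R] [PartialOrder R]
    [IsOrderedRing R] (T : Finset α) {f : α → R} (hf : ∀ k ∈ T, 0 ≤ f k) (m : ℕ) :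
    ∑ t ∈ T.powersetCard m, ∏ k ∈ t, f k ≤ (∑ k ∈ T, f k) ^ m := by
  rw [← Finset.esymm_map_val]
  exact Multiset.esymm_le_sum_pow (by simpa using hf) m

theorem Finset.sum_le_sum_of_injOn {ι κ M : Type*} [AddCommMonoid M] [PartialOrder M]
    [IsOrderedAddMonoid M] {s : Finset ι} {t : Finset κ} (e : ι → κ) (he : Set.InjOn e s)
    (hst : Set.MapsTo e s t) {f : ι → M} {g : κ → M} (hfg : ∀ i ∈ s, f i ≤ g (e i))
    (hg : ∀ j ∈ t, 0 ≤ g j) : ∑ i ∈ s, f i ≤ ∑ j ∈ t, g j := by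
  classical
  calc ∑ i ∈ s, f i ≤ ∑ i ∈ s, g (e i) := sum_le_sum hfg
    _ = ∑ j ∈ s.image e, g j := (sum_image he).symm
    _ ≤ ∑ j ∈ t, g j :=
      sum_le_sum_of_subset_of_nonneg (image_subset_iff.2 hst) fun j hj _ => hg j hj

def setsWithSum (n h : ℕ) : Finset (Finset ℕ) :=
  ((range (n + 1)).powersetCard h).filter fun s => ∑ k ∈ s, k = n

theorem mem_setsWithSum {n h : ℕ} {s : Finset ℕ} :
    s ∈ setsWithSum n h ↔ s ⊆ range (n + 1) ∧ s.card = h ∧ ∑ k ∈ s, k = n := by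
  rw [setsWithSum, mem_filter, mem_powersetCard, and_assoc]

section LargestElement

variable {n h : ℕ} {s : Finset ℕ} (hh : 1 ≤ h) (hs : s ∈ setsWithSum n h)
include hh hs

theorem sup_mem_of_mem_setsWithSum : s.sup id ∈ s := by
  obtain ⟨i, hi, hsup⟩ := exists_mem_eq_sup s
    (card_pos.1 ((mem_setsWithSum.1 hs).2.1 ▸ hh)) id
  exact hsup ▸ hi

theorem sup_add_sum_erase_of_mem_setsWithSum : s.sup id + ∑ k ∈ s.erase (s.sup id), k = n := by
  simpa only [id] using
    (add_sum_erase s id (sup_mem_of_mem_setsWithSum hh hs)).trans (mem_setsWithSum.1 hs).2.2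

omit hh in
theorem le_mul_sup_of_mem_setsWithSum : n ≤ h * s.sup id := by
  obtain ⟨-, hcard, hsum⟩ := mem_setsWithSum.1 hs
  calc n = ∑ k ∈ s, k := hsum.symm
    _ ≤ ∑ _k ∈ s, s.sup id := sum_le_sum fun k hk => le_sup (f := id) hk
    _ = h * s.sup id := by rw [sum_const, hcard, smul_eq_mul]

theorem erase_sup_mem_powersetCard :
    s.erase (s.sup id) ∈ (range (n + 1)).powersetCard (h - 1) := by
  obtain ⟨hsub, hcard, -⟩ := mem_setsWithSum.1 hs
  rw [mem_powersetCard, card_erase_of_mem (sup_mem_of_mem_setsWithSum hh hs), hcard]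
  exact ⟨(erase_subset _ _).trans hsub, rfl⟩

end LargestElement

theorem injOn_erase_sup_setsWithSum {n h : ℕ} (hh : 1 ≤ h) :
    Set.InjOn (fun s => s.erase (s.sup id)) (setsWithSum n h : Set (Finset ℕ)) := by
  intro s hs s' hs' heq
  simp only at heq
  have hsup : s.sup id = s'.sup id := by
    have h₁ := sup_add_sum_erase_of_mem_setsWithSum hh hs
    have h₂ := sup_add_sum_erase_of_mem_setsWithSum hh hs'
    rw [heq] at h₁
    omega
  rw [← insert_erase (sup_mem_of_mem_setsWithSum hh hs),
    ← insert_erase (sup_mem_of_mem_setsWithSum hh hs'), heq, hsup]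

theorem sum_setsWithSum_prod_le {f : ℕ → ℝ} (hf : ∀ k, 0 ≤ f k) {n h : ℕ} (hh : 1 ≤ h) {B : ℝ}
    (hB : ∀ k, n ≤ h * k → k ≤ n → f k ≤ B) :
    ∑ s ∈ setsWithSum n h, ∏ k ∈ s, f k ≤ B * (∑ k ∈ range (n + 1), f k) ^ (h - 1) := by
  have hB0 : 0 ≤ B := (hf n).trans (hB n (Nat.le_mul_of_pos_left n hh) le_rfl)
  calc ∑ s ∈ setsWithSum n h, ∏ k ∈ s, f k
      ≤ ∑ t ∈ (range (n + 1)).powersetCard (h - 1), B * ∏ k ∈ t, f k := by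
        refine sum_le_sum_of_injOn _ (injOn_erase_sup_setsWithSum hh)
          (fun s hs => erase_sup_mem_powersetCard hh hs) (fun s hs => ?_)
          fun t _ => mul_nonneg hB0 (prod_nonneg fun k _ => hf k)
        have hmem := sup_mem_of_mem_setsWithSum hh hs
        rw [← mul_prod_erase s f hmem]
        refine mul_le_mul_of_nonneg_right (hB _ (le_mul_sup_of_mem_setsWithSum hs) ?_)
          (prod_nonneg fun k _ => hf k)
        exact Nat.lt_succ_iff.1 (mem_range.1 ((mem_setsWithSum.1 hs).1 hmem))
    _ ≤ B * (∑ k ∈ range (n + 1), f k) ^ (h - 1) := by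
        rw [← mul_sum]
        exact mul_le_mul_of_nonneg_left
          (sum_powersetCard_prod_le_pow _ (fun k _ => hf k) _) hB0

section Completion

variable {n h q : ℕ} {t : Finset ℕ} (hh : 1 ≤ h) (hq : 2 * h * q ≤ n)
  (ht : t ∈ (Ico q (2 * q)).powersetCard (h - 1))
include hh hq ht

theorem sum_add_two_mul_le : ∑ k ∈ t, k + 2 * q ≤ n := by
  obtain ⟨hsub, hcard⟩ := mem_powersetCard.1 ht
  have hsum : ∑ k ∈ t, k ≤ (h - 1) * (2 * q) := by
    simpa [hcard] using sum_le_card_nsmul t id (2 * q) fun k hk => (mem_Ico.1 (hsub hk)).2.le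
  obtain ⟨h', rfl⟩ := Nat.exists_eq_add_of_le' hh
  have : (h' + 1 - 1) * (2 * q) + 2 * q = 2 * (h' + 1) * q := by
    rw [Nat.add_sub_cancel]; ring
  omega

theorem insert_sub_sum_mem_setsWithSum :
    insert (n - ∑ k ∈ t, k) t ∈ setsWithSum n h := by
  have htop := sum_add_two_mul_le hh hq ht
  obtain ⟨hsub, hcard⟩ := mem_powersetCard.1 ht
  have hnot : n - ∑ k ∈ t, k ∉ t := fun hmem => by
    have := (mem_Ico.1 (hsub hmem)).2
    omega
  refine mem_setsWithSum.2 ⟨insert_subset (by simp) fun k hk => ?_, ?_, ?_⟩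
  · have := (mem_Ico.1 (hsub hk)).2
    rw [mem_range]
    omega
  · rw [card_insert_of_notMem hnot, hcard]
    omega
  · rw [sum_insert hnot]
    omega

theorem mem_Icc_of_mem_insert_sub_sum {k : ℕ} (hk : k ∈ insert (n - ∑ k ∈ t, k) t) :
    q ≤ k ∧ k ≤ n := by
  have htop := sum_add_two_mul_le hh hq ht
  obtain ⟨hsub, -⟩ := mem_powersetCard.1 ht
  rcases mem_insert.1 hk with rfl | hk
  · omega
  · have := mem_Ico.1 (hsub hk)
    omega

end Completion

theorem choose_mul_pow_le_sum_setsWithSum_prod {f : ℕ → ℝ} (hf : ∀ k, 0 ≤ f k) {n h q : ℕ}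
    (hh : 1 ≤ h) (hq : 2 * h * q ≤ n) {c : ℝ} (hc0 : 0 ≤ c) (hc : ∀ k, q ≤ k → k ≤ n → c ≤ f k) :
    (q.choose (h - 1) : ℝ) * c ^ h ≤ ∑ s ∈ setsWithSum n h, ∏ k ∈ s, f k := by
  have hinj : Set.InjOn (fun t => insert (n - ∑ k ∈ t, k) t)
      ((Ico q (2 * q)).powersetCard (h - 1) : Set (Finset ℕ)) := by
    intro t ht t' ht' heq
    -- the added element is at least `2q`, so filtering below `2q` recovers `t`
    have hrecover : ∀ u ∈ (Ico q (2 * q)).powersetCard (h - 1),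
        (insert (n - ∑ k ∈ u, k) u).filter (· < 2 * q) = u := fun u hu => by
      have := sum_add_two_mul_le hh hq hu
      rw [filter_insert, if_neg (by omega), filter_true_of_mem fun k hk =>
        (mem_Ico.1 ((mem_powersetCard.1 hu).1 hk)).2]
    rw [← hrecover t ht, ← hrecover t' ht', show insert _ t = insert _ t' from heq]
  calc (q.choose (h - 1) : ℝ) * c ^ h
      = ∑ _t ∈ (Ico q (2 * q)).powersetCard (h - 1), c ^ h := by
        rw [sum_const, card_powersetCard, Nat.card_Ico, nsmul_eq_mul, two_mul, Nat.add_sub_cancel]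
    _ ≤ ∑ s ∈ setsWithSum n h, ∏ k ∈ s, f k := by
        refine sum_le_sum_of_injOn _ hinj
          (fun t ht => insert_sub_sum_mem_setsWithSum hh hq ht) (fun t ht => ?_)
          fun s _ => prod_nonneg fun k _ => hf k
        calc c ^ h = ∏ _k ∈ insert (n - ∑ k ∈ t, k) t, c := by
              rw [prod_const, (mem_setsWithSum.1 (insert_sub_sum_mem_setsWithSum hh hq ht)).2.1]
          _ ≤ _ := prod_le_prod (fun _ _ => hc0) fun k hk =>
              hc k (mem_Icc_of_mem_insert_sub_sum hh hq ht hk).1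
                (mem_Icc_of_mem_insert_sub_sum hh hq ht hk).2

section

variable {A : Set ℕ}

theorem cntA_mono (A : Set ℕ) : Monotone (cntA A) := fun _ y hxy =>
  Set.ncard_le_ncard (fun _ hn => ⟨hn.1, hn.2.trans hxy⟩)
    ((Set.finite_Iic ⌊y⌋₊).subset fun _ hn => Nat.le_floor hn.2)

open scoped Classical in
theorem cntA_natCast (A : Set ℕ) (n : ℕ) : cntA A n = Nat.count (· ∈ A) (n + 1) := by
  rw [cntA, Nat.count_eq_card_filter_range, ← Set.ncard_coe_finset]
  congr 1
  ext k
  simp [and_comm]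

theorem lt_cntA_iff (hA : A.Infinite) {k n : ℕ} : k < cntA A n ↔ seqA A k ≤ n := by
  classical
  rw [cntA_natCast, Nat.lt_nth_iff_count_lt (p := (· ∈ A)) hA, Nat.lt_succ_iff]
  rfl

theorem tendsto_cntA (hA : A.Infinite) : Tendsto (fun n : ℕ => cntA A n) atTop atTop :=
  tendsto_atTop.2 fun b => eventually_atTop.2
    ⟨seqA A b, fun _ hn => ((lt_cntA_iff hA).2 hn).le⟩

theorem ORseq.isBigO_cntA_div (hOR : ORseq A) {c : ℕ} (hc : c ≠ 0) :
    (fun n : ℕ => (cntA A n : ℝ)) =O[atTop] fun n => (cntA A (n / c : ℕ) : ℝ) := by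
  have hiter (j : ℕ) :
      (fun x : ℝ => (cntA A (2 ^ j * x) : ℝ)) =O[atTop] fun x => (cntA A x : ℝ) := by
    induction j with
    | zero => simp only [pow_zero, one_mul]; exact isBigO_refl _ _
    | succ j ih =>
      simpa only [pow_succ', mul_assoc, Function.comp_def, id] using
        (hOR.comp_tendsto (tendsto_id.const_mul_atTop (by positivity))).trans ih
  have hdiv : Tendsto (fun n : ℕ => ((n / c : ℕ) : ℝ)) atTop atTop :=
    tendsto_natCast_atTop_atTop.comp (Nat.tendsto_div_const_atTop hc)
  refine IsBigO.trans (IsBigO.of_bound' ?_) ((hiter (c + 1)).comp_tendsto hdiv)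
  filter_upwards [eventually_ge_atTop c] with n hn
  simp only [Function.comp_apply, Real.norm_natCast, Nat.cast_le]
  apply cntA_mono
  have h2c : 2 * c ≤ 2 ^ (c + 1) := by
    rw [pow_succ']
    exact Nat.mul_le_mul_left 2 Nat.lt_two_pow_self.le
  exact_mod_cast (Nat.le_two_mul_mul_div hc hn).trans (Nat.mul_le_mul_right _ h2c)

/-- With `A(m) = j + 1`, so that `a_j ≤ m`, the bound `a_{4j} ≤ D² a_j ≤ D² m` gives
`A(⌈D²⌉ m) ≥ 4j + 1 ≥ 2 A(m)`. -/
theorem PIseq.exists_two_mul_cntA_le (hA : A.Infinite) (hPI : PIseq A) :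
    ∃ F : ℕ, 2 ≤ F ∧ ∀ᶠ m : ℕ in atTop, 2 * cntA A m ≤ cntA A (F * m : ℕ) := by
  obtain ⟨D, hD0, hD⟩ := hPI.exists_pos
  obtain ⟨n₁, hn₁⟩ := eventually_atTop.1 hD.bound
  have hstep (j : ℕ) (hj : n₁ ≤ j) : (seqA A (2 * j) : ℝ) ≤ D * seqA A j := by
    simpa only [Real.norm_natCast] using hn₁ j hj
  refine ⟨⌈D ^ 2⌉₊ + 2, by omega, ?_⟩
  filter_upwards [tendsto_atTop.1 (tendsto_cntA hA) (n₁ + 2)] with m hm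
  obtain ⟨j, hj⟩ : ∃ j, cntA A m = j + 1 := ⟨cntA A m - 1, by omega⟩
  have hjm : (seqA A j : ℝ) ≤ m := by exact_mod_cast (lt_cntA_iff hA).1 (by omega)
  have h4j : (seqA A (4 * j) : ℝ) ≤ (⌈D ^ 2⌉₊ + 2 : ℕ) * m :=
    calc (seqA A (4 * j) : ℝ) = seqA A (2 * (2 * j)) := by ring_nf
      _ ≤ D * (D * seqA A j) := by
        exact (hstep _ (by omega)).trans (mul_le_mul_of_nonneg_left (hstep _ (by omega)) hD0.le)
      _ ≤ D ^ 2 * m := by rw [← mul_assoc, ← sq]; gcongr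
      _ ≤ (⌈D ^ 2⌉₊ + 2 : ℕ) * m := by
        gcongr
        push_cast
        linarith [Nat.le_ceil (D ^ 2)]
  have := (lt_cntA_iff hA).2 (by exact_mod_cast h4j : seqA A (4 * j) ≤ (⌈D ^ 2⌉₊ + 2) * m)
  omega

noncomputable def weight (A : Set ℕ) (k : ℕ) : ℝ := (cntA A k : ℝ) / (k + 1)

theorem weight_nonneg (A : Set ℕ) (k : ℕ) : 0 ≤ weight A k := by
  unfold weight
  positivity

theorem weight_le_cntA_div {k m n : ℕ} (hmk : m ≤ k) (hkn : k ≤ n) :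
    weight A k ≤ cntA A n / (m + 1) :=
  div_le_div₀ (Nat.cast_nonneg _) (mod_cast cntA_mono A (mod_cast hkn)) (by positivity)
    (mod_cast Nat.succ_le_succ hmk)

theorem cntA_div_le_weight {k q n : ℕ} (hqk : q ≤ k) (hkn : k ≤ n) :
    cntA A q / (n + 1) ≤ weight A k :=
  div_le_div₀ (Nat.cast_nonneg _) (mod_cast cntA_mono A (mod_cast hqk)) (by positivity)
    (mod_cast Nat.succ_le_succ hkn)

/-- Split the sum at `m = n / F`: the `n - m < F (m + 1)` terms above `m` are each at most
`A(n) / (m + 1)`, and `A(m) ≤ A(n) / 2`, so the induction hypothesis at `m` closes the step. -/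
theorem sum_range_weight_le {F T : ℕ} (hF : 2 ≤ F)
    (hdouble : ∀ m ≥ T, 2 * cntA A m ≤ cntA A (F * m : ℕ)) (n : ℕ) :
    ∑ k ∈ range (n + 1), weight A k ≤
      2 * F * cntA A n + ∑ k ∈ range (F * T + 1), weight A k := by
  induction n using Nat.strong_induction_on with
  | _ n ih =>
  rcases le_or_gt n (F * T) with hn | hn
  · refine le_add_of_nonneg_of_le (by positivity) ?_
    exact sum_le_sum_of_subset_of_nonneg (range_subset_range.2 (by omega))
      fun k _ _ => weight_nonneg A k
  set m := n / F
  have hmT : T ≤ m := (Nat.le_div_iff_mul_le (by omega)).2 (by rw [mul_comm]; omega)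
  have hmn : m < n := Nat.div_lt_self (by omega) (by omega)
  have hnF : n < F * (m + 1) := Nat.lt_mul_div_succ n (by omega)
  have htail : ∑ k ∈ Ico (m + 1) (n + 1), weight A k ≤ F * cntA A n :=
    calc ∑ k ∈ Ico (m + 1) (n + 1), weight A k
        ≤ (n - m : ℕ) * (cntA A n / (m + 1) : ℝ) := by
          refine (sum_le_card_nsmul _ _ (cntA A n / (m + 1) : ℝ) fun k hk => ?_).trans_eq
            (by rw [Nat.card_Ico, nsmul_eq_mul, Nat.add_sub_add_right])
          obtain ⟨hmk, hkn⟩ := mem_Ico.1 hk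
          exact weight_le_cntA_div (by omega) (by omega)
      _ ≤ F * cntA A n := by
          rw [mul_div_assoc', div_le_iff₀ (by positivity), mul_right_comm]
          gcongr
          exact_mod_cast (by omega : n - m ≤ F * (m + 1))
  have hhalf : 2 * (cntA A m : ℝ) ≤ cntA A n := by
    exact_mod_cast (hdouble m hmT).trans (cntA_mono A (by exact_mod_cast Nat.mul_div_le n F))
  rw [← sum_range_add_sum_Ico _ (by omega : m + 1 ≤ n + 1)]
  nlinarith [ih m hmn, Nat.cast_nonneg (α := ℝ) F]

theorem PIseq.isBigO_sum_range_weight (hA : A.Infinite) (hPI : PIseq A) :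
    (fun n : ℕ => ∑ k ∈ range (n + 1), weight A k) =O[atTop] fun n => (cntA A n : ℝ) := by
  obtain ⟨F, hF, hdouble⟩ := hPI.exists_two_mul_cntA_le hA
  obtain ⟨T, hT⟩ := eventually_atTop.1 hdouble
  refine IsBigO.of_bound (2 * F + 1) ?_
  filter_upwards [tendsto_atTop.1 (tendsto_cntA hA) ⌈∑ k ∈ range (F * T + 1), weight A k⌉₊]
    with n hn
  rw [Real.norm_of_nonneg (sum_nonneg fun k _ => weight_nonneg A k), Real.norm_natCast]
  have hC : ∑ k ∈ range (F * T + 1), weight A k ≤ cntA A n :=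
    (Nat.le_ceil _).trans (mod_cast hn)
  linarith [sum_range_weight_le hF hT n]

theorem PIseq.isBigO_sum_setsWithSum_prod_weight (hA : A.Infinite) (hPI : PIseq A) {h : ℕ}
    (hh : 1 ≤ h) :
    (fun n : ℕ => ∑ s ∈ setsWithSum n h, ∏ k ∈ s, weight A k) =O[atTop]
      fun n => (cntA A n : ℝ) ^ h / n := by
  have hbound : (fun n : ℕ => ∑ s ∈ setsWithSum n h, ∏ k ∈ s, weight A k) =O[atTop]
      fun n => h * (cntA A n / n : ℝ) * (∑ k ∈ range (n + 1), weight A k) ^ (h - 1) := by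
    refine IsBigO.of_bound' ?_
    filter_upwards [eventually_ge_atTop 1] with n hn
    rw [Real.norm_of_nonneg (sum_nonneg fun s _ => prod_nonneg fun k _ => weight_nonneg A k),
      Real.norm_of_nonneg (mul_nonneg (by positivity)
        (pow_nonneg (sum_nonneg fun k _ => weight_nonneg A k) _))]
    refine sum_setsWithSum_prod_le (weight_nonneg A) hh fun k hnk hkn => ?_
    have hnk' : (n : ℝ) ≤ h * (k + 1) := by exact_mod_cast hnk.trans (by nlinarith)
    calc weight A k ≤ cntA A n / (k + 1) := weight_le_cntA_div le_rfl hkn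
      _ ≤ h * (cntA A n / n) := by
        rw [mul_div_assoc', div_le_div_iff₀ (by positivity) (by positivity)]
        nlinarith [Nat.cast_nonneg (α := ℝ) (cntA A n)]
  refine (hbound.trans (((isBigO_refl _ _).const_mul_left _).mul
    ((hPI.isBigO_sum_range_weight hA).pow _))).congr_right fun n => ?_
  rw [div_mul_eq_mul_div, ← pow_succ', Nat.sub_add_cancel hh]

theorem ORseq.isBigO_sum_setsWithSum_prod_weight (hOR : ORseq A) {h : ℕ} (hh : 1 ≤ h) :
    (fun n : ℕ => (cntA A n : ℝ) ^ h / n) =O[atTop]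
      fun n => ∑ s ∈ setsWithSum n h, ∏ k ∈ s, weight A k := by
  have h2h : 2 * h ≠ 0 := by omega
  have hpow : (fun n : ℕ => (n : ℝ) ^ (h - 1)) =O[atTop]
      fun n => ((n / (2 * h)).choose (h - 1) : ℝ) := by
    have hlin : (fun n : ℕ => (n : ℝ)) =O[atTop] fun n => ((n / (2 * h) : ℕ) : ℝ) := by
      refine IsBigO.of_bound (2 * (2 * h)) ?_
      filter_upwards [eventually_ge_atTop (2 * h)] with n hn
      simp only [Real.norm_natCast]
      exact_mod_cast Nat.le_two_mul_mul_div h2h hn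
    exact (hlin.pow _).trans
      ((isTheta_choose (h - 1)).symm.isBigO.comp_tendsto (Nat.tendsto_div_const_atTop h2h))
  have hinv : (fun n : ℕ => (n : ℝ)⁻¹) =O[atTop] fun n => ((n : ℝ) + 1)⁻¹ := by
    refine IsBigO.of_bound 2 ?_
    filter_upwards [eventually_ge_atTop 1] with n hn
    have hn' : (1 : ℝ) ≤ n := by exact_mod_cast hn
    rw [norm_inv, norm_inv, Real.norm_natCast, Real.norm_of_nonneg (by positivity),
      ← div_eq_mul_inv, ← one_div, div_le_div_iff₀ (by positivity) (by positivity)]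
    linarith
  refine ((hpow.mul (((hOR.isBigO_cntA_div h2h).mul hinv).pow h)).congr' ?_ .rfl).trans
    (IsBigO.of_bound' (.of_forall fun n => ?_))
  · filter_upwards [eventually_ge_atTop 1] with n hn
    have hn' : (n : ℝ) ≠ 0 := by positivity
    have hsplit : (n : ℝ) ^ h = n ^ (h - 1) * n := by rw [← pow_succ, Nat.sub_add_cancel hh]
    rw [mul_pow, inv_pow, hsplit]
    field_simp
  · rw [Real.norm_of_nonneg (by positivity),
      Real.norm_of_nonneg (sum_nonneg fun s _ => prod_nonneg fun k _ => weight_nonneg A k)]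
    simpa only [div_eq_mul_inv] using choose_mul_pow_le_sum_setsWithSum_prod (weight_nonneg A) hh
      (Nat.mul_div_le n (2 * h)) (by positivity) fun k hqk hkn => cntA_div_le_weight hqk hkn

end

theorem stmt_5 (A : Set ℕ) (hA : ORplus A) (h : ℕ) (hh : 2 ≤ h) :
    (fun n : ℕ => ∑ s ∈ ((Finset.range (n + 1)).powersetCard h).filter
        (fun s => ∑ k ∈ s, k = n), ∏ k ∈ s, (cntA A k : ℝ) / (k + 1))
      =Θ[atTop] (fun n : ℕ => (cntA A n : ℝ) ^ h / n) := by
  obtain ⟨hinf, hOR, hPI⟩ := hA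
  exact ⟨hPI.isBigO_sum_setsWithSum_prod_weight hinf (by omega),
    hOR.isBigO_sum_setsWithSum_prod_weight (by omega)⟩
end
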